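/- arXiv:2010.13475 — 3 statements merged into one kernel-verified Lean document; each statement's English description precedes it below -/
import Mathlib

section
/- For every integer n ≥ 1 and every r with 0 ≤ r ≤ n−1, the centralizer of a^{2r+1} in U_{6n} is the cyclic subgroup generated by a, i.e., C_{U_{6n}}(a^{2r+1}) = ⟨a⟩, a subgroup of order 2n. -/
/-- The inversion automorphism of `Multiplicative (ZMod 3)` (i.e. `b ↦ b⁻¹`). -/
def negAut : MulAut (Multiplicative (ZMod 3)) := MulEquiv.inv (Multiplicative (ZMod 3))

lemma negAut_sq : negAut * negAut = 1 := by
  ext x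
  simp [negAut]

/-- The action of `ZMod (2*n)` on `Multiplicative (ZMod 3)`, where the generator acts
by inversion (negation). -/
def U6nAct (n : ℕ) : Multiplicative (ZMod (2 * n)) →* MulAut (Multiplicative (ZMod 3)) :=
  AddMonoidHom.toMultiplicativeLeft
    (ZMod.lift (2 * n) ⟨zmultiplesHom _ (Additive.ofMul negAut), by
      show ((2 * n : ℕ) : ℤ) • Additive.ofMul negAut = 0
      have : negAut ^ (2 * n) = 1 := by
        rw [pow_mul, pow_two, negAut_sq, one_pow]
      rw [← zpow_natCast negAut, Nat.cast_mul] at this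
      rw [show ((2 * n : ℕ) : ℤ) • Additive.ofMul negAut
            = Additive.ofMul (negAut ^ ((2 * n : ℕ) : ℤ)) from rfl]
      rw [Nat.cast_mul, this]; rfl⟩)

/-- The group `U_{6n} = ⟨a, b | a^(2n) = b³ = 1, a⁻¹ b a = b⁻¹⟩`, realized as the
semidirect product `(ZMod 3) ⋊ (ZMod (2n))` where the generator of `ZMod (2n)` acts by
negation. -/
abbrev U6n (n : ℕ) := SemidirectProduct (Multiplicative (ZMod 3))
    (Multiplicative (ZMod (2 * n))) (U6nAct n)

/-- The generator `a` of `U_{6n}`, of order `2n`. -/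
def Ua (n : ℕ) : U6n n := SemidirectProduct.inr (Multiplicative.ofAdd 1)

/-- The generator `b` of `U_{6n}`, of order `3`. -/
def Ub (n : ℕ) : U6n n := SemidirectProduct.inl (Multiplicative.ofAdd 1)

/-- The non-commuting graph of `U_{6n}`: vertices are the non-central elements, two
distinct vertices are adjacent iff they do not commute. -/
def ncGraph (n : ℕ) : SimpleGraph {x : U6n n // x ∉ Subgroup.center (U6n n)} where
  Adj u v := u.val * v.val ≠ v.val * u.val
  symm := ⟨fun _ _ h => fun e => h e.symm⟩
  loopless := ⟨fun _ h => h rfl⟩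

/-! Write `U₆ₙ = ⟨b⟩ ⋊ ⟨a⟩`. Since `⟨a⟩` is abelian, an element commutes with `a^(2r+1)` exactly
when its `⟨b⟩`-component is fixed by `a^(2r+1)`. Odd powers of `a` act by inversion, and inversion
on `ℤ/3` fixes only the identity; so the centralizer is `⟨a⟩`, of order `orderOf a = 2n`. -/

namespace SemidirectProduct

variable {N G : Type*} [Group N] [Group G] {φ : G →* MulAut N}

theorem commute_inr_iff {x : N ⋊[φ] G} {g : G} :
    Commute x (inr g) ↔ φ g x.left = x.left ∧ Commute x.right g := by
  simp only [Commute, SemiconjBy, SemidirectProduct.ext_iff, mul_left, mul_right, left_inr,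
    right_inr, map_one, mul_one, one_mul]
  exact and_congr_left' eq_comm

theorem mem_range_inr_iff {x : N ⋊[φ] G} : x ∈ (inr : G →* N ⋊[φ] G).range ↔ x.left = 1 :=
  ⟨by rintro ⟨g, rfl⟩; rfl, fun h => ⟨x.right, by ext <;> simp [h]⟩⟩

theorem centralizer_inr_eq_range {g : G} (hg : g ∈ Subgroup.center G)
    (hfix : ∀ y : N, φ g y = y → y = 1) :
    Subgroup.centralizer {inr g} = (inr : G →* N ⋊[φ] G).range := by
  ext x
  rw [Subgroup.mem_centralizer_singleton_iff, ← commute_iff_eq, commute_inr_iff,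
    mem_range_inr_iff]
  exact ⟨fun h => hfix _ h.1, fun h => ⟨by rw [h, map_one], Subgroup.mem_center_iff.1 hg _⟩⟩

end SemidirectProduct

lemma pow_eq_self_of_mul_self_eq_one {M : Type*} [Monoid M] {x : M} (hx : x * x = 1) {k : ℕ}
    (hk : Odd k) : x ^ k = x := by
  obtain ⟨m, rfl⟩ := hk
  rw [pow_succ, pow_mul, sq, hx, one_pow, one_mul]

lemma Multiplicative.zpowers_ofAdd_one (m : ℕ) :
    Subgroup.zpowers (Multiplicative.ofAdd (1 : ZMod m)) = ⊤ := by
  refine (Subgroup.eq_top_iff' _).2 fun x => ⟨ZMod.cast x.toAdd, ?_⟩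
  dsimp only
  rw [← ofAdd_zsmul, zsmul_one, ZMod.intCast_zmod_cast, ofAdd_toAdd]

lemma range_inr_eq_zpowers_Ua (n : ℕ) :
    (SemidirectProduct.inr : _ →* U6n n).range = Subgroup.zpowers (Ua n) := by
  rw [MonoidHom.range_eq_map, ← Multiplicative.zpowers_ofAdd_one, MonoidHom.map_zpowers, Ua]

lemma orderOf_Ua (n : ℕ) : orderOf (Ua n) = 2 * n := by
  rw [Ua, orderOf_injective _ SemidirectProduct.inr_injective, orderOf_ofAdd_eq_addOrderOf,
    ZMod.addOrderOf_one]

lemma U6nAct_ofAdd_intCast (n : ℕ) (k : ℤ) :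
    U6nAct n (Multiplicative.ofAdd (k : ZMod (2 * n))) = negAut ^ k := by
  simp only [U6nAct, AddMonoidHom.toMultiplicativeLeft, Equiv.coe_fn_mk]
  change Additive.toMul (ZMod.lift (2 * n) _ (k : ZMod (2 * n))) = _
  rw [ZMod.lift_coe]
  rfl

lemma U6nAct_ofAdd_one (n : ℕ) : U6nAct n (Multiplicative.ofAdd 1) = negAut := by
  simpa using U6nAct_ofAdd_intCast n 1

lemma eq_one_of_negAut_apply_eq_self {x : Multiplicative (ZMod 3)} (h : negAut x = x) : x = 1 := by
  revert x; decide

theorem U6n_centralizer_odd_a_general (n : ℕ) (r : ℕ) :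
    Subgroup.centralizer {Ua n ^ (2 * r + 1)} = Subgroup.zpowers (Ua n) ∧
    Nat.card (Subgroup.centralizer {Ua n ^ (2 * r + 1)} : Subgroup (U6n n)) = 2 * n := by
  have hfix : ∀ x, U6nAct n (Multiplicative.ofAdd 1 ^ (2 * r + 1)) x = x → x = 1 := by
    intro x hx
    rw [map_pow, U6nAct_ofAdd_one,
      pow_eq_self_of_mul_self_eq_one negAut_sq (odd_two_mul_add_one r)] at hx
    exact eq_one_of_negAut_apply_eq_self hx
  have hcent : Subgroup.centralizer {Ua n ^ (2 * r + 1)} = Subgroup.zpowers (Ua n) := by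
    rw [Ua, ← map_pow, SemidirectProduct.centralizer_inr_eq_range
      (Subgroup.mem_center_iff.2 fun _ => mul_comm _ _) hfix, range_inr_eq_zpowers_Ua, Ua]
  exact ⟨hcent, by rw [hcent, Nat.card_zpowers, orderOf_Ua]⟩

/-- For `0 ≤ r ≤ n-1`, the centralizer of `a^(2r+1)` in `U_{6n}` is the cyclic subgroup
generated by `a`, which has order `2n`. -/
theorem U6n_centralizer_odd_a (n : ℕ) (hn : 1 ≤ n) (r : ℕ) (hr : r < n) :
    Subgroup.centralizer {Ua n ^ (2 * r + 1)} = Subgroup.zpowers (Ua n) ∧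
    Nat.card (Subgroup.centralizer {Ua n ^ (2 * r + 1)} : Subgroup (U6n n)) = 2 * n :=
  U6n_centralizer_odd_a_general n r
end

section
/- For every integer n ≥ 1, every r with 0 ≤ r ≤ n−1 and every k ∈ {1,2}, the centralizer of a^{2r}b^k in U_{6n} is C_{U_{6n}}(a^{2r}b^k) = {a^{2s}b^j : 0 ≤ s ≤ n−1, j ∈ {0,1,2}} = ⟨a², b⟩, a subgroup of order 3n. -/
/-! Since `a^(2r)` acts trivially on `⟨b⟩`, `x` commutes with `a^(2r) b^k` exactly when the
`a`-component of `x` fixes `b^k`; as `b^k ≠ b^(-k)`, this means that the `a`-exponent of `x` is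
even. The centralizer is therefore the kernel of the surjective parity map `U_{6n} → ℤ/2`, of
order `6n / 2 = 3n`. -/

open Multiplicative SemidirectProduct

theorem SemidirectProduct.mem_centralizer_singleton_iff_of_map_right_eq_one
    {N G : Type*} [CommGroup N] [CommGroup G] {φ : G →* MulAut N} {g x : N ⋊[φ] G}
    (hg : φ g.right = 1) :
    x ∈ Subgroup.centralizer {g} ↔ φ x.right g.left = g.left := by
  rw [Subgroup.mem_centralizer_singleton_iff, SemidirectProduct.ext_iff]
  simp only [mul_left, mul_right, hg, MulAut.one_apply, mul_comm g.right, and_true]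
  rw [mul_comm g.left, mul_right_inj]

theorem negAut_pow_two_mul (s : ℕ) : negAut ^ (2 * s) = 1 := by
  rw [pow_mul, sq, negAut_sq, one_pow]

theorem negAut_pow_apply_eq_self_iff {y : Multiplicative (ZMod 3)} (hy : y ≠ 1) (m : ℕ) :
    (negAut ^ m) y = y ↔ Even m := by
  rcases Nat.even_or_odd' m with ⟨k, rfl | rfl⟩
  · simp [negAut_pow_two_mul]
  · have hy' : y⁻¹ ≠ y := by revert y; decide
    rw [pow_succ, negAut_pow_two_mul, one_mul]
    simpa [negAut] using hy'

theorem U6nAct_ofAdd_natCast (n m : ℕ) :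
    U6nAct n (ofAdd (m : ZMod (2 * n))) = negAut ^ m := by
  simp only [U6nAct, AddMonoidHom.toMultiplicativeLeft_apply_apply, toAdd_ofAdd]
  rw [← Int.cast_natCast (R := ZMod (2 * n)) m, ZMod.lift_coe]
  simp

theorem U6nAct_apply_eq_self_iff (n : ℕ) [NeZero n] (x : Multiplicative (ZMod (2 * n)))
    {y : Multiplicative (ZMod 3)} (hy : y ≠ 1) :
    U6nAct n x y = y ↔ Even (toAdd x).val := by
  rw [← ofAdd_toAdd x, ← ZMod.natCast_zmod_val (toAdd x), U6nAct_ofAdd_natCast,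
    negAut_pow_apply_eq_self_iff hy, toAdd_ofAdd, ZMod.natCast_zmod_val]

theorem Ua_pow (n p : ℕ) : Ua n ^ p = inr (ofAdd (p : ZMod (2 * n))) := by
  rw [Ua, ← map_pow, ← ofAdd_nsmul, nsmul_one]

theorem Ub_pow (n j : ℕ) : Ub n ^ j = inl (ofAdd (j : ZMod 3)) := by
  rw [Ub, ← map_pow, ← ofAdd_nsmul, nsmul_one]

theorem Ua_pow_two_mul_mul_Ub_pow (n s j : ℕ) :
    Ua n ^ (2 * s) * Ub n ^ j = ⟨ofAdd (j : ZMod 3), ofAdd ((2 * s : ℕ) : ZMod (2 * n))⟩ := by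
  rw [Ua_pow, Ub_pow]
  ext
  · rw [mul_left, left_inr, right_inr, left_inl, U6nAct_ofAdd_natCast, negAut_pow_two_mul,
      MulAut.one_apply, one_mul]
  · rw [mul_right, right_inr, right_inl, mul_one]

def U6nParity (n : ℕ) : U6n n →* Multiplicative (ZMod 2) :=
  (AddMonoidHom.toMultiplicative (ZMod.castHom (dvd_mul_right 2 n) (ZMod 2)).toAddMonoidHom).comp
    rightHom

theorem U6nParity_eq_one_iff (n : ℕ) [NeZero n] (x : U6n n) :
    U6nParity n x = 1 ↔ Even (toAdd x.right).val := by
  change ofAdd ((toAdd x.right).cast : ZMod 2) = 1 ↔ _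
  rw [ofAdd_eq_one, ZMod.cast_eq_val, ZMod.natCast_eq_zero_iff, even_iff_two_dvd]

theorem U6nParity_surjective (n : ℕ) : Function.Surjective (U6nParity n) :=
  (ZMod.castHom_surjective (dvd_mul_right 2 n)).comp (rightHom_surjective (φ := U6nAct n))

theorem index_ker_U6nParity (n : ℕ) : (U6nParity n).ker.index = 2 := by
  rw [Subgroup.index_ker, MonoidHom.range_eq_top.2 (U6nParity_surjective n), Subgroup.card_top,
    Nat.card_congr toAdd, Nat.card_zmod]

theorem card_U6n (n : ℕ) : Nat.card (U6n n) = 6 * n := by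
  rw [Nat.card_congr SemidirectProduct.equivProd, Nat.card_prod, Nat.card_congr toAdd,
    Nat.card_congr toAdd, Nat.card_zmod, Nat.card_zmod]
  ring

theorem card_ker_U6nParity (n : ℕ) : Nat.card (U6nParity n).ker = 3 * n := by
  have h := (U6nParity n).ker.card_mul_index
  rw [index_ker_U6nParity, card_U6n] at h
  omega

theorem centralizer_Ua_pow_two_mul_mul_Ub_pow_eq_ker (n : ℕ) [NeZero n] (r : ℕ) {k : ℕ}
    (hk : k = 1 ∨ k = 2) :
    Subgroup.centralizer {Ua n ^ (2 * r) * Ub n ^ k} = (U6nParity n).ker := by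
  have hk' : ofAdd (k : ZMod 3) ≠ 1 := by rcases hk with rfl | rfl <;> decide
  ext x
  rw [Ua_pow_two_mul_mul_Ub_pow, mem_centralizer_singleton_iff_of_map_right_eq_one
    (by rw [U6nAct_ofAdd_natCast, negAut_pow_two_mul]), U6nAct_apply_eq_self_iff n _ hk',
    MonoidHom.mem_ker, U6nParity_eq_one_iff]

theorem mem_ker_U6nParity_iff (n : ℕ) [NeZero n] (x : U6n n) :
    x ∈ (U6nParity n).ker ↔ ∃ s < n, ∃ j < 3, x = Ua n ^ (2 * s) * Ub n ^ j := by
  rw [MonoidHom.mem_ker, U6nParity_eq_one_iff]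
  constructor
  · rintro ⟨s, hs⟩
    have := ZMod.val_lt (toAdd x.right)
    refine ⟨s, by omega, (toAdd x.left).val, ZMod.val_lt _, ?_⟩
    rw [Ua_pow_two_mul_mul_Ub_pow]
    ext <;> simp [two_mul, ← hs]
  · rintro ⟨s, hs, j, -, rfl⟩
    rw [Ua_pow_two_mul_mul_Ub_pow, toAdd_ofAdd, ZMod.val_natCast, Nat.mod_eq_of_lt (by omega)]
    exact even_two_mul s

theorem ker_U6nParity_eq_closure (n : ℕ) [NeZero n] :
    (U6nParity n).ker = Subgroup.closure {Ua n ^ 2, Ub n} := by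
  apply le_antisymm
  · intro x hx
    obtain ⟨s, -, j, -, rfl⟩ := (mem_ker_U6nParity_iff n x).1 hx
    rw [pow_mul]
    exact mul_mem (pow_mem (Subgroup.subset_closure (by simp)) _)
      (pow_mem (Subgroup.subset_closure (by simp)) _)
  · rw [Subgroup.closure_le]
    rintro _ (rfl | rfl) <;> rw [SetLike.mem_coe, MonoidHom.mem_ker]
    · rw [map_pow]
      exact (by decide : ∀ z : Multiplicative (ZMod 2), z ^ 2 = 1) _
    · simp [U6nParity, Ub]

theorem U6n_centralizer_even_ab_general (n : ℕ) (hn : 1 ≤ n) (r : ℕ) (k : ℕ)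
    (hk : k = 1 ∨ k = 2) :
    (Subgroup.centralizer {Ua n ^ (2 * r) * Ub n ^ k} : Set (U6n n)) =
      {x | ∃ s < n, ∃ j < 3, x = Ua n ^ (2 * s) * Ub n ^ j} ∧
    Subgroup.centralizer {Ua n ^ (2 * r) * Ub n ^ k}
      = Subgroup.closure {Ua n ^ 2, Ub n} ∧
    Nat.card (Subgroup.centralizer {Ua n ^ (2 * r) * Ub n ^ k} : Subgroup (U6n n))
      = 3 * n := by
  have : NeZero n := ⟨by omega⟩
  rw [centralizer_Ua_pow_two_mul_mul_Ub_pow_eq_ker n r hk]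
  exact ⟨Set.ext (mem_ker_U6nParity_iff n), ker_U6nParity_eq_closure n, card_ker_U6nParity n⟩

/-- For `0 ≤ r ≤ n-1` and `k ∈ {1,2}`, the centralizer of `a^(2r)·b^k` in `U_{6n}` is
`{a^(2s)·b^j : 0 ≤ s ≤ n-1, j ∈ {0,1,2}} = ⟨a², b⟩`, a subgroup of order `3n`. -/
theorem U6n_centralizer_even_ab (n : ℕ) (hn : 1 ≤ n) (r : ℕ) (hr : r < n) (k : ℕ)
    (hk : k = 1 ∨ k = 2) :
    (Subgroup.centralizer {Ua n ^ (2 * r) * Ub n ^ k} : Set (U6n n)) =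
      {x | ∃ s < n, ∃ j < 3, x = Ua n ^ (2 * s) * Ub n ^ j} ∧
    Subgroup.centralizer {Ua n ^ (2 * r) * Ub n ^ k}
      = Subgroup.closure {Ua n ^ 2, Ub n} ∧
    Nat.card (Subgroup.centralizer {Ua n ^ (2 * r) * Ub n ^ k} : Subgroup (U6n n))
      = 3 * n :=
  U6n_centralizer_even_ab_general n hn r k hk
end

section
/- For every integer n ≥ 1, the chromatic number of the non-commuting graph Γ(U_{6n}) is χ(Γ(U_{6n})) = 4. -/
theorem SemidirectProduct.mul_comm_iff {N G : Type*} [Group N] [CommGroup G] {φ : G →* MulAut N}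
    (x y : N ⋊[φ] G) :
    x * y = y * x ↔ x.left * φ x.right y.left = y.left * φ y.right x.left := by
  simp [SemidirectProduct.ext_iff, mul_comm x.right]

theorem SimpleGraph.chromaticNumber_eq_card_of_adj_iff_ne {V α : Type*} [Fintype α]
    {G : SimpleGraph V} (f : V → α) (hf : Function.Surjective f)
    (hadj : ∀ u v, G.Adj u v ↔ f u ≠ f v) : G.chromaticNumber = Fintype.card α := by
  let e : G ≃g completeMultipartiteGraph (fun a ↦ {v // f v = a}) :=
    ⟨(Equiv.sigmaFiberEquiv f).symm, fun {u v} ↦ by simp [hadj]⟩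
  rw [chromaticNumber_congr e,
    completeMultipartiteGraph.chromaticNumber _ fun a ↦ ⟨_, Function.surjInv_eq hf a⟩]

lemma negAut_zpow_apply (m : ℤ) (x : Multiplicative (ZMod 3)) :
    (negAut ^ m) x = if Even m then x else x⁻¹ := by
  have h2 : negAut ^ (2 : ℤ) = 1 := by rw [zpow_two, negAut_sq]
  obtain ⟨k, rfl | rfl⟩ := Int.even_or_odd' m
  · simp [zpow_mul, h2]
  · rw [zpow_add, zpow_mul, h2, one_zpow, one_mul, zpow_one,
      if_neg (Int.not_even_two_mul_add_one k)]
    rfl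

lemma U6nAct_apply (n : ℕ) (g : Multiplicative (ZMod (2 * n))) (x : Multiplicative (ZMod 3)) :
    U6nAct n g x = if ZMod.castHom (dvd_mul_right 2 n) (ZMod 2) g.toAdd = 0 then x else x⁻¹ := by
  obtain ⟨m, hm⟩ := ZMod.intCast_surjective g.toAdd
  have : U6nAct n g = negAut ^ m := by
    rw [← ofAdd_toAdd g, ← hm]
    simp [U6nAct, ZMod.lift_coe]
  simp [this, negAut_zpow_apply, ← hm, ZMod.intCast_eq_zero_iff_even]

namespace U6n

variable {n : ℕ}

def parity (x : U6n n) : ZMod 2 := ZMod.castHom (dvd_mul_right 2 n) (ZMod 2) x.right.toAdd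

lemma parity_Ua : parity (Ua n) = 1 := map_one _

lemma parity_Ub : parity (Ub n) = 0 := map_zero _

lemma mul_comm_iff (x y : U6n n) :
    x * y = y * x ↔
      x.left * (if parity x = 0 then y.left else y.left⁻¹) =
        y.left * (if parity y = 0 then x.left else x.left⁻¹) := by
  rw [SemidirectProduct.mul_comm_iff, U6nAct_apply, U6nAct_apply]
  rfl

lemma mem_center_iff (x : U6n n) :
    x ∈ Subgroup.center (U6n n) ↔ x.left = 1 ∧ parity x = 0 := by
  rw [Subgroup.mem_center_iff]
  constructor
  · intro h
    have ha := (mul_comm_iff _ _).1 (h (Ua n))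
    have hb := (mul_comm_iff _ _).1 (h (Ub n))
    rw [parity_Ua, show (Ua n).left = 1 from rfl] at ha
    rw [parity_Ub, show (Ub n).left = Multiplicative.ofAdd 1 from rfl] at hb
    revert ha hb
    generalize x.left = l
    generalize parity x = e
    decide +revert
  · rintro ⟨hl, he⟩ g
    simp [mul_comm_iff, hl, he]

def commClass (x : U6n n) : Option (Multiplicative (ZMod 3)) :=
  if parity x = 0 then none else some x.left

lemma mul_comm_iff_commClass_eq {x y : U6n n} (hx : x ∉ Subgroup.center (U6n n))
    (hy : y ∉ Subgroup.center (U6n n)) : x * y = y * x ↔ commClass x = commClass y := by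
  rw [mem_center_iff] at hx hy
  rw [mul_comm_iff, commClass, commClass]
  revert hx hy
  generalize x.left = a
  generalize y.left = b
  generalize parity x = e
  generalize parity y = f
  decide +revert

lemma exists_notMem_center_commClass_eq (c : Option (Multiplicative (ZMod 3))) :
    ∃ x ∉ Subgroup.center (U6n n), commClass x = c := by
  cases c with
  | none => exact ⟨Ub n, by simp [mem_center_iff, Ub], by simp [commClass, parity_Ub]⟩
  | some l =>
    have hl : parity (⟨l, Multiplicative.ofAdd 1⟩ : U6n n) = 1 := map_one _
    refine ⟨⟨l, Multiplicative.ofAdd 1⟩, fun h ↦ ?_, ?_⟩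
    · exact one_ne_zero (hl ▸ ((mem_center_iff _).1 h).2)
    · rw [commClass, hl, if_neg one_ne_zero]

end U6n

theorem U6n_chromatic_number_general (n : ℕ) :
    (ncGraph n).chromaticNumber = 4 := by
  refine SimpleGraph.chromaticNumber_eq_card_of_adj_iff_ne (G := ncGraph n)
    (fun v ↦ U6n.commClass v.val) (fun c ↦ ?_)
    (fun u v ↦ (U6n.mul_comm_iff_commClass_eq u.2 v.2).not)
  obtain ⟨x, hx, hc⟩ := U6n.exists_notMem_center_commClass_eq (n := n) c
  exact ⟨⟨x, hx⟩, hc⟩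

/-- The chromatic number of the non-commuting graph of `U_{6n}` is `4`. -/
theorem U6n_chromatic_number (n : ℕ) (hn : 1 ≤ n) :
    (ncGraph n).chromaticNumber = 4 :=
  U6n_chromatic_number_general n
end
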